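/- arXiv:2301.01654 — 7 statements merged into one kernel-verified Lean document; each statement's English description precedes it below -/
import Mathlib

section
/- For every M ∈ GL₃(F) and every (α, β) ∈ H_q, the denominator M₃₁α + M₃₂β + M₃₃ is nonzero, the pair M·(α, β) = ((M₁₁α + M₁₂β + M₁₃)/(M₃₁α + M₃₂β + M₃₃), (M₂₁α + M₂₂β + M₂₃)/(M₃₁α + M₃₂β + M₃₃)) again lies in H_q, and this operation defines a group action of GL₃(F) on H_q: the identity matrix acts trivially and (MN)·(α, β) = M·(N·(α, β)) for all M, N ∈ GL₃(F). -/
/-- The finite upper half-space: pairs `(α, β)` with `1, α, β` linearly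
independent over `F`. -/
def UHS (F : Type*) [Field F] (E : Type*) [Field E] [Algebra F E] : Set (E × E) :=
  {z | LinearIndependent F ![1, z.1, z.2]}

/-- The denominator of the fractional linear action. -/
def mden (F : Type*) [Field F] (E : Type*) [Field E] [Algebra F E]
    (M : Matrix (Fin 3) (Fin 3) F) (z : E × E) : E :=
  algebraMap F E (M 2 0) * z.1 + algebraMap F E (M 2 1) * z.2 + algebraMap F E (M 2 2)

/-- The fractional linear action of a `3 × 3` matrix on a pair. -/
def mact (F : Type*) [Field F] (E : Type*) [Field E] [Algebra F E]
    (M : Matrix (Fin 3) (Fin 3) F) (z : E × E) : E × E :=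
  ((algebraMap F E (M 0 0) * z.1 + algebraMap F E (M 0 1) * z.2 + algebraMap F E (M 0 2)) /
      mden F E M z,
   (algebraMap F E (M 1 0) * z.1 + algebraMap F E (M 1 1) * z.2 + algebraMap F E (M 1 2)) /
      mden F E M z)

/-!
In homogeneous coordinates `z ↦ (z.1, z.2, 1)` the fractional linear action is multiplication
by `M` followed by dehomogenization `w ↦ (w 0 / w 2, w 1 / w 2)`, and `z ∈ UHS F E` says that
the homogeneous vector is `F`-linearly independent. Independence is preserved by invertible
`F`-matrices and by scaling with a nonzero element of `E`; in particular the last coordinate,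
which is the denominator, cannot vanish. Rescaling does not change the dehomogenized point,
so composition reduces to associativity of matrix multiplication.
-/

open Matrix

theorem LinearIndependent.mulVec_of_isUnit {K A ι : Type*} [Field K] [Ring A] [Algebra K A]
    [Fintype ι] [DecidableEq ι] {v : ι → A} (hv : LinearIndependent K v) {M : Matrix ι ι K}
    (hM : IsUnit M) :
    LinearIndependent K (M.map (algebraMap K A) *ᵥ v) := by
  have hker : LinearMap.ker (Fintype.linearCombination K v) = ⊥ :=
    LinearMap.ker_eq_bot.mpr (linearIndependent_iff_injective_fintypeLinearCombination.mp hv)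
  have hrows : M.map (algebraMap K A) *ᵥ v = Fintype.linearCombination K v ∘ M.row := by
    ext i
    simp [mulVec, dotProduct, Fintype.linearCombination_apply, Algebra.smul_def]
  rw [hrows]
  exact (linearIndependent_rows_iff_isUnit.mpr hM).map' _ hker

theorem LinearIndependent.smul_of_ne_zero {K A ι : Type*} [Field K] [DivisionRing A]
    [Algebra K A] {v : ι → A} (hv : LinearIndependent K v) {c : A} (hc : c ≠ 0) :
    LinearIndependent K (c • v) :=
  hv.map' (DistribMulAction.toLinearEquiv K A (Units.mk0 c hc)).toLinearMap (LinearEquiv.ker _)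

namespace UHS

variable {F E : Type*} [Field F] [Field E] [Algebra F E]

def homog (z : E × E) : Fin 3 → E := ![z.1, z.2, 1]

def dehomog (w : Fin 3 → E) : E × E := (w 0 / w 2, w 1 / w 2)

theorem dehomog_homog (z : E × E) : dehomog (homog z) = z := by
  simp [dehomog, homog]

theorem homog_dehomog {w : Fin 3 → E} (hw : w 2 ≠ 0) :
    homog (dehomog w) = (w 2)⁻¹ • w := by
  ext i
  fin_cases i <;> simp [homog, dehomog, div_eq_inv_mul, hw]

theorem dehomog_smul (w : Fin 3 → E) {c : E} (hc : c ≠ 0) : dehomog (c • w) = dehomog w := by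
  simp [dehomog, mul_div_mul_left _ _ hc]

theorem linearIndependent_homog_iff (z : E × E) :
    LinearIndependent F (homog z) ↔ z ∈ UHS F E := by
  rw [UHS, Set.mem_ofPred_eq, ← linearIndependent_equiv (finRotate 3).symm]
  convert Iff.rfl
  ext i
  fin_cases i <;> rfl

variable (F) in
theorem mden_eq (M : Matrix (Fin 3) (Fin 3) F) (z : E × E) :
    mden F E M z = (M.map (algebraMap F E) *ᵥ homog z) 2 := by
  simp [mden, homog, mulVec, dotProduct, Fin.sum_univ_three]

variable (F) in
theorem mact_eq (M : Matrix (Fin 3) (Fin 3) F) (z : E × E) :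
    mact F E M z = dehomog (M.map (algebraMap F E) *ᵥ homog z) := by
  simp [mact, mden, dehomog, homog, mulVec, dotProduct, Fin.sum_univ_three]

theorem linearIndependent_mulVec_homog (M : GL (Fin 3) F) {z : E × E} (hz : z ∈ UHS F E) :
    LinearIndependent F ((M : Matrix (Fin 3) (Fin 3) F).map (algebraMap F E) *ᵥ homog z) :=
  ((linearIndependent_homog_iff z).mpr hz).mulVec_of_isUnit M.isUnit

theorem mden_ne_zero (M : GL (Fin 3) F) {z : E × E} (hz : z ∈ UHS F E) :
    mden F E M z ≠ 0 := by
  rw [mden_eq]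
  exact (linearIndependent_mulVec_homog M hz).ne_zero 2

theorem mact_mem (M : GL (Fin 3) F) {z : E × E} (hz : z ∈ UHS F E) :
    mact F E M z ∈ UHS F E := by
  have hw := linearIndependent_mulVec_homog M hz
  rw [mact_eq, ← linearIndependent_homog_iff, homog_dehomog (hw.ne_zero 2)]
  exact hw.smul_of_ne_zero (inv_ne_zero (hw.ne_zero 2))

theorem mact_one (z : E × E) : mact F E 1 z = z := by
  rw [mact_eq, Matrix.map_one _ (map_zero _) (map_one _), one_mulVec, dehomog_homog]

theorem mact_mul (M N : Matrix (Fin 3) (Fin 3) F) {z : E × E} (hz : mden F E N z ≠ 0) :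
    mact F E (M * N) z = mact F E M (mact F E N z) := by
  rw [mden_eq] at hz
  rw [mact_eq, mact_eq F N, mact_eq, homog_dehomog hz, mulVec_smul,
    dehomog_smul _ (inv_ne_zero hz), Matrix.map_mul, ← mulVec_mulVec]

end UHS

open UHS in
theorem action_well_defined_general (F : Type*) [Field F]
    (E : Type*) [Field E] [Algebra F E] :
    (∀ M : GL (Fin 3) F, ∀ z ∈ UHS F E,
        mden F E M.val z ≠ 0 ∧ mact F E M.val z ∈ UHS F E) ∧
    (∀ z ∈ UHS F E, mact F E ((1 : GL (Fin 3) F) : Matrix (Fin 3) (Fin 3) F) z = z) ∧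
    (∀ M N : GL (Fin 3) F, ∀ z ∈ UHS F E,
        mact F E ((M * N : GL (Fin 3) F) : Matrix (Fin 3) (Fin 3) F) z =
          mact F E (M : Matrix (Fin 3) (Fin 3) F) (mact F E (N : Matrix (Fin 3) (Fin 3) F) z)) := by
  refine ⟨fun M _ hz => ⟨mden_ne_zero M hz, mact_mem M hz⟩, fun z _ => ?_,
    fun M N _ hz => ?_⟩
  · rw [Units.val_one, mact_one]
  · rw [Units.val_mul, mact_mul _ _ (mden_ne_zero N hz)]

theorem action_well_defined (F : Type*) [Field F] [Fintype F]
    (E : Type*) [Field E] [Algebra F E] (h3 : Module.finrank F E = 3) :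
    (∀ M : GL (Fin 3) F, ∀ z ∈ UHS F E,
        mden F E M.val z ≠ 0 ∧ mact F E M.val z ∈ UHS F E) ∧
    (∀ z ∈ UHS F E, mact F E ((1 : GL (Fin 3) F) : Matrix (Fin 3) (Fin 3) F) z = z) ∧
    (∀ M N : GL (Fin 3) F, ∀ z ∈ UHS F E,
        mact F E ((M * N : GL (Fin 3) F) : Matrix (Fin 3) (Fin 3) F) z =
          mact F E (M : Matrix (Fin 3) (Fin 3) F) (mact F E (N : Matrix (Fin 3) (Fin 3) F) z)) :=
  action_well_defined_general F E
end

section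
/- The stabilizer of the distinguished point p₀ = (d², d) under the action of GL₃(F) on H_q is exactly the set K of invertible matrices of the form [[a, cδ, bδ], [b, a, cδ], [c, b, a]] with a, b, c ∈ F; that is, M·p₀ = p₀ if and only if M has this form. -/
/-!
Since `δ` is not a cube, `X³ - δ` is irreducible, so it is the minimal polynomial of `d` and
`1, d, d²` are linearly independent over `F`; in particular `p₀ = (d², d)` lies in the upper
half-space and every invertible matrix has a nonzero denominator there. Clearing that
denominator and reducing with `d³ = δ`, the fixed-point equations `M • p₀ = p₀` become two
`F`-linear relations between `1, d, d²`, whose six vanishing coefficients are exactly the linear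
conditions cutting out the matrices `!![a, cδ, bδ; b, a, cδ; c, b, a]`.
-/

open Polynomial

section

variable {F : Type*} [Field F] {E : Type*} [Field E] [Algebra F E]

theorem mem_UHS_iff {z : E × E} :
    z ∈ UHS F E ↔ ∀ x y w : F,
      algebraMap F E x + algebraMap F E y * z.1 + algebraMap F E w * z.2 = 0 →
        x = 0 ∧ y = 0 ∧ w = 0 := by
  simp [UHS, Fintype.linearIndependent_iff, Fin.sum_univ_three, Fin.forall_fin_succ,
    Fin.forall_fin_succ_pi, Fin.forall_fin_zero_pi, Algebra.smul_def]

theorem minpoly_eq_X_pow_three_sub_C {δ : F} (hδ : ¬∃ x : F, x ^ 3 = δ) {d : E}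
    (hd : d ^ 3 = algebraMap F E δ) : minpoly F d = X ^ 3 - C δ := by
  have hirr : Irreducible (X ^ 3 - C δ : F[X]) :=
    X_pow_sub_C_irreducible_of_prime Nat.prime_three fun b hb => hδ ⟨b, hb⟩
  refine (minpoly.eq_of_irreducible_of_monic hirr ?_ (monic_X_pow_sub_C δ three_ne_zero)).symm
  simp [hd]

theorem sq_cubeRoot_mem_UHS {δ : F} (hδ : ¬∃ x : F, x ^ 3 = δ) {d : E}
    (hd : d ^ 3 = algebraMap F E δ) : (d ^ 2, d) ∈ UHS F E := by
  refine mem_UHS_iff.2 fun x y w h => ?_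
  have hp : (C y * X ^ 2 + C w * X + C x : F[X]) = 0 := by
    by_contra hne
    have hle := minpoly.degree_le_of_ne_zero F d hne (by
      simp only [map_add, map_mul, aeval_C, map_pow, aeval_X]
      linear_combination h)
    rw [minpoly_eq_X_pow_three_sub_C hδ hd, degree_X_pow_sub_C three_pos] at hle
    exact absurd (hle.trans degree_quadratic_le) (by norm_num)
  refine ⟨?_, ?_, ?_⟩
  · simpa using congrArg (coeff · 0) hp
  · simpa using congrArg (coeff · 2) hp
  · simpa using congrArg (coeff · 1) hp

theorem mden_ne_zero {z : E × E} (hz : z ∈ UHS F E) {M : Matrix (Fin 3) (Fin 3) F}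
    (hM : IsUnit M) : mden F E M z ≠ 0 := by
  intro h
  obtain ⟨h22, h20, h21⟩ := mem_UHS_iff.1 hz (M 2 2) (M 2 0) (M 2 1)
    (by rw [mden] at h; linear_combination h)
  refine (Matrix.isUnit_iff_isUnit_det M).1 hM |>.ne_zero (Matrix.det_eq_zero_of_row_eq_zero 2 ?_)
  intro j
  fin_cases j <;> assumption

theorem mact_eq_self_iff {M : Matrix (Fin 3) (Fin 3) F} {z : E × E} (hM : mden F E M z ≠ 0) :
    mact F E M z = z ↔
      algebraMap F E (M 0 0) * z.1 + algebraMap F E (M 0 1) * z.2 + algebraMap F E (M 0 2) =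
          z.1 * mden F E M z ∧
        algebraMap F E (M 1 0) * z.1 + algebraMap F E (M 1 1) * z.2 + algebraMap F E (M 1 2) =
          z.2 * mden F E M z := by
  rw [mact, Prod.ext_iff, div_eq_iff hM, div_eq_iff hM]

theorem exists_eq_deltaCirculant_iff (δ : F) (M : Matrix (Fin 3) (Fin 3) F) :
    (∃ a b c : F, M = !![a, c * δ, b * δ; b, a, c * δ; c, b, a]) ↔
      (M 0 2 = M 2 1 * δ ∧ M 0 0 = M 2 2 ∧ M 0 1 = M 2 0 * δ) ∧
        (M 1 2 = M 2 0 * δ ∧ M 1 0 = M 2 1 ∧ M 1 1 = M 2 2) := by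
  constructor
  · rintro ⟨a, b, c, rfl⟩
    simp
  · rintro ⟨⟨h02, h00, h01⟩, h12, h10, h11⟩
    refine ⟨M 2 2, M 2 1, M 2 0, ?_⟩
    ext i j
    fin_cases i <;> fin_cases j <;> simp [*]

theorem mact_sq_cubeRoot_eq_self_iff {δ : F} (hδ : ¬∃ x : F, x ^ 3 = δ) {d : E}
    (hd : d ^ 3 = algebraMap F E δ) {M : Matrix (Fin 3) (Fin 3) F} (hM : IsUnit M) :
    mact F E M (d ^ 2, d) = (d ^ 2, d) ↔
      (M 0 2 = M 2 1 * δ ∧ M 0 0 = M 2 2 ∧ M 0 1 = M 2 0 * δ) ∧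
        (M 1 2 = M 2 0 * δ ∧ M 1 0 = M 2 1 ∧ M 1 1 = M 2 2) := by
  have hp₀ := sq_cubeRoot_mem_UHS hδ hd
  have coeffs_eq_zero_iff (x y w : F) :
      algebraMap F E x + algebraMap F E y * d ^ 2 + algebraMap F E w * d = 0 ↔
        x = 0 ∧ y = 0 ∧ w = 0 := by
    refine ⟨mem_UHS_iff.1 hp₀ x y w, ?_⟩
    rintro ⟨rfl, rfl, rfl⟩
    simp
  rw [mact_eq_self_iff (mden_ne_zero hp₀ hM), mden]
  simp only [← sub_eq_zero (b := _ * δ), ← sub_eq_zero (b := M 2 2), ← sub_eq_zero (b := M 2 1),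
    ← coeffs_eq_zero_iff, map_sub, map_mul]
  -- each fixed-point equation differs from its linear relation by a multiple of `d³ - δ`
  constructor
  · rintro ⟨h₁, h₂⟩
    exact ⟨by linear_combination h₁ + (algebraMap F E (M 2 1) + algebraMap F E (M 2 0) * d) * hd,
      by linear_combination h₂ + algebraMap F E (M 2 0) * hd⟩
  · rintro ⟨h₁, h₂⟩
    exact ⟨by linear_combination h₁ - (algebraMap F E (M 2 1) + algebraMap F E (M 2 0) * d) * hd,
      by linear_combination h₂ - algebraMap F E (M 2 0) * hd⟩

end

theorem stabilizer_of_base_point_general (F : Type*) [Field F]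
    (E : Type*) [Field E] [Algebra F E]
    (δ : F) (hδ : ¬∃ x : F, x ^ 3 = δ) (d : E) (hd : d ^ 3 = algebraMap F E δ) :
    ∀ M : GL (Fin 3) F,
      mact F E M.val (d ^ 2, d) = (d ^ 2, d) ↔
        ∃ a b c : F, M.val = !![a, c * δ, b * δ; b, a, c * δ; c, b, a] := by
  intro M
  rw [mact_sq_cubeRoot_eq_self_iff hδ hd M.isUnit, exists_eq_deltaCirculant_iff]

theorem stabilizer_of_base_point (F : Type*) [Field F] [Fintype F]
    (E : Type*) [Field E] [Algebra F E] (h3 : Module.finrank F E = 3)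
    (δ : F) (hδ : ¬∃ x : F, x ^ 3 = δ) (d : E) (hd : d ^ 3 = algebraMap F E δ) :
    ∀ M : GL (Fin 3) F,
      mact F E M.val (d ^ 2, d) = (d ^ 2, d) ↔
        ∃ a b c : F, M.val = !![a, c * δ, b * δ; b, a, c * δ; c, b, a] :=
  stabilizer_of_base_point_general F E δ hδ d hd
end

section
/- Let V = {φ : G → ℂ : φ(γg) = φ(g) for all γ ∈ Γ, g ∈ G} be the ℂ-vector space of left-Γ-invariant functions on G, and for f : G → ℂ define the linear operator T_f on functions by (T_f φ)(x) = Σ_{y∈G} f(y)·φ(xy⁻¹). Then T_f maps V into V, and its trace as a linear endomorphism of V equals (1/|Γ|) · Σ_{x∈G} Σ_{γ∈Γ} f(x⁻¹γx). -/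
/-!
Averaging over left translations by `Γ` is a projection `P` onto the invariant functions, and
right convolution `T` with `f` preserves them, so the trace of `T` on them is the trace of `T ∘ P`
on all functions. Now `T ∘ P = |Γ|⁻¹ ∑_{γ, y} f y • (φ ↦ φ (γ * · * y⁻¹))`, and the trace of
each substitution operator counts the fixed points `x` of `x ↦ γ x y⁻¹`, i.e. the `x`
with `y = x⁻¹ γ x`.
-/

/-- The space of left-`Γ`-invariant complex-valued functions on `G`. -/
noncomputable def invariantFunctions (G : Type*) [Group G] (Γ : Subgroup G) : Submodule ℂ (G → ℂ) where
  carrier := {φ | ∀ γ ∈ Γ, ∀ g : G, φ (γ * g) = φ g}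
  add_mem' := by
    intro φ ψ hφ hψ γ hγ g
    simp [hφ γ hγ g, hψ γ hγ g]
  zero_mem' := by
    intro γ hγ g
    rfl
  smul_mem' := by
    intro c φ hφ γ hγ g
    simp [hφ γ hγ g]

open Finset

namespace LinearMap

lemma trace_restrict_eq_trace_comp_of_isProj {R M : Type*} [CommRing R] [IsDomain R]
    [IsPrincipalIdealRing R] [AddCommGroup M] [Module R M] [Module.Finite R M] [Module.Free R M]
    {p : Submodule R M} {P : M →ₗ[R] M} (hP : IsProj p P) (T : M →ₗ[R] M)
    (hT : ∀ x ∈ p, T x ∈ p) :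
    trace R p (T.restrict hT) = trace R M (T ∘ₗ P) := by
  have hTP : ∀ x, (T ∘ₗ P) x ∈ p := fun x ↦ hT _ (hP.map_mem x)
  rw [← trace_restrict_eq_of_forall_mem p _ hTP]
  congr 1
  ext x
  simp [hP.map_id x x.2]

lemma trace_funLeft {R m : Type*} [CommRing R] [Fintype m] [DecidableEq m] (σ : m → m) :
    trace R (m → R) (funLeft R R σ) = #{x | σ x = x} := by
  rw [trace_eq_matrix_trace R (Pi.basisFun R m), Matrix.trace, ← sum_boole]
  refine sum_congr rfl fun x _ ↦ ?_
  simp [funLeft_apply, Pi.single_apply]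

end LinearMap

section leftAverage

variable {G : Type*} [Group G] (Γ : Subgroup G) [Fintype Γ]

noncomputable def leftAverage : (G → ℂ) →ₗ[ℂ] (G → ℂ) :=
  (Nat.card Γ : ℂ)⁻¹ • ∑ γ : Γ, LinearMap.funLeft ℂ ℂ ((γ : G) * ·)

lemma leftAverage_apply (φ : G → ℂ) (g : G) :
    leftAverage Γ φ g = (Nat.card Γ : ℂ)⁻¹ * ∑ γ : Γ, φ (γ * g) := by
  simp [leftAverage, LinearMap.funLeft_apply]

lemma isProj_leftAverage : LinearMap.IsProj (invariantFunctions G Γ) (leftAverage Γ) where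
  map_mem φ γ hγ g := by
    simp only [leftAverage_apply, ← mul_assoc]
    congr 1
    exact Fintype.sum_equiv (Equiv.mulRight ⟨γ, hγ⟩) _ _ fun δ ↦ rfl
  map_id φ hφ := by
    ext g
    simp [leftAverage_apply, fun γ : Γ ↦ hφ γ γ.2 g, Nat.card_eq_fintype_card]

end leftAverage

section rightConvolution

variable {G : Type*} [Group G] [Fintype G]

noncomputable def rightConvolution (f : G → ℂ) : (G → ℂ) →ₗ[ℂ] (G → ℂ) :=
  ∑ y, f y • LinearMap.funLeft ℂ ℂ (· * y⁻¹)

lemma rightConvolution_apply (f φ : G → ℂ) (x : G) :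
    rightConvolution f φ x = ∑ y, f y * φ (x * y⁻¹) := by
  simp [rightConvolution, LinearMap.funLeft_apply]

lemma rightConvolution_mem_invariantFunctions {Γ : Subgroup G} (f : G → ℂ) {φ : G → ℂ}
    (hφ : φ ∈ invariantFunctions G Γ) : rightConvolution f φ ∈ invariantFunctions G Γ := by
  intro γ hγ g
  simp only [rightConvolution_apply, mul_assoc, hφ γ hγ]

lemma rightConvolution_comp_funLeft_mul (f : G → ℂ) (γ : G) :
    rightConvolution f ∘ₗ LinearMap.funLeft ℂ ℂ (γ * ·) =
      ∑ y, f y • LinearMap.funLeft ℂ ℂ (fun x ↦ γ * (x * y⁻¹)) := by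
  ext φ x
  simp [rightConvolution_apply, LinearMap.funLeft_apply]

lemma trace_rightConvolution_comp_funLeft_mul (f : G → ℂ) (γ : G) :
    LinearMap.trace ℂ (G → ℂ) (rightConvolution f ∘ₗ LinearMap.funLeft ℂ ℂ (γ * ·)) =
      ∑ x, f (x⁻¹ * γ * x) := by
  classical
  have fixed_iff (x y : G) : γ * (x * y⁻¹) = x ↔ x⁻¹ * γ * x = y := by
    rw [← mul_assoc, mul_inv_eq_iff_eq_mul, mul_assoc, inv_mul_eq_iff_eq_mul, eq_comm]
  simp only [rightConvolution_comp_funLeft_mul, map_sum, map_smul, LinearMap.trace_funLeft,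
    smul_eq_mul, ← sum_boole, mul_sum, fixed_iff]
  rw [sum_comm]
  simp

lemma trace_rightConvolution_comp_leftAverage (Γ : Subgroup G) [Fintype Γ] (f : G → ℂ) :
    LinearMap.trace ℂ (G → ℂ) (rightConvolution f ∘ₗ leftAverage Γ) =
      (1 / (Nat.card Γ : ℂ)) * ∑ x : G, ∑ γ : Γ, f (x⁻¹ * (γ : G) * x) := by
  rw [leftAverage, ← Module.End.mul_eq_comp, mul_smul_comm, mul_sum, map_smul, map_sum]
  simp only [Module.End.mul_eq_comp, trace_rightConvolution_comp_funLeft_mul, smul_eq_mul,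
    one_div, sum_comm (γ := G)]

end rightConvolution

theorem trace_on_invariants (G : Type*) [Group G] [Fintype G]
    (Γ : Subgroup G) [Fintype Γ] (f : G → ℂ) :
    ∃ S : invariantFunctions G Γ →ₗ[ℂ] invariantFunctions G Γ,
      (∀ φ : invariantFunctions G Γ, ∀ x : G,
          (S φ : G → ℂ) x = ∑ y : G, f y * (φ : G → ℂ) (x * y⁻¹)) ∧
      LinearMap.trace ℂ (invariantFunctions G Γ) S =
        (1 / (Nat.card Γ : ℂ)) * ∑ x : G, ∑ γ : Γ, f (x⁻¹ * (γ : G) * x) :=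
  ⟨(rightConvolution f).restrict fun _ ↦ rightConvolution_mem_invariantFunctions f,
    fun φ x ↦ rightConvolution_apply f φ x,
    by rw [LinearMap.trace_restrict_eq_trace_comp_of_isProj (isProj_leftAverage Γ),
      trace_rightConvolution_comp_leftAverage]⟩
end

section
/- Let G be a finite group with center Z, and let H, K be subgroups of G with Z ≤ H and Z ≤ K. Suppose that for every t ∈ G one has tHt⁻¹ ∩ K = Z. Then the number of right cosets of H in G equals the number of (H, K)-double cosets times the index of Z in K: |H\G| = |H\G/K| · (|K|/|Z|). Equivalently, the map sending a pair (HtK, kZ) to the right coset Htk is a well-defined bijection from (H\G/K) × (K/Z) onto H\G. -/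
/-!
Let `K` act on the left cosets `G ⧸ H`; inversion identifies these with the right cosets
`H\G`, and the `K`-orbits with the double cosets `H\G/K`. The stabilizer of `tH` in `K` is
`tHt⁻¹ ∩ K = Z`, the same subgroup for every point, so by orbit–stabilizer each orbit is a copy
of `K ⧸ Z` and `G ⧸ H ≃ (H\G/K) × (K ⧸ Z)`.
-/

namespace MulAction

noncomputable def equivOrbitRelQuotientProdOfStabilizerEq {K X : Type*} [Group K]
    [MulAction K X] {S : Subgroup K} (hS : ∀ x : X, stabilizer K x = S) :
    X ≃ orbitRel.Quotient K X × K ⧸ S :=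
  calc X ≃ Σ ω : orbitRel.Quotient K X, K ⧸ stabilizer K ω.out :=
        selfEquivSigmaOrbitsQuotientStabilizer K X
    _ ≃ Σ _ : orbitRel.Quotient K X, K ⧸ S :=
        Equiv.sigmaCongrRight fun ω => Subgroup.quotientEquivOfEq (hS ω.out)
    _ ≃ orbitRel.Quotient K X × K ⧸ S := Equiv.sigmaEquivProd _ _

lemma stabilizer_quotient_mk {G : Type*} [Group G] (H : Subgroup G) (t : G) :
    stabilizer G (t : G ⧸ H) = H.map (MulAut.conj t).toMonoidHom := by
  have : (t : G ⧸ H) = t • ((1 : G) : G ⧸ H) := by simp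
  rw [this, stabilizer_smul_eq_stabilizer_map_conj, stabilizer_quotient]

end MulAction

namespace DoubleCoset

open MulAction

variable {G : Type*} [Group G]

lemma setoid_iff_setoid_inv (H K : Subgroup G) (a b : G) :
    setoid (H : Set G) K a b ↔ setoid (K : Set G) H a⁻¹ b⁻¹ := by
  simp only [rel_iff]
  constructor
  · rintro ⟨h, hh, k, hk, rfl⟩
    exact ⟨k⁻¹, K.inv_mem hk, h⁻¹, H.inv_mem hh, by group⟩
  · rintro ⟨k, hk, h, hh, hb⟩
    exact ⟨h⁻¹, H.inv_mem hh, k⁻¹, K.inv_mem hk, by rw [← inv_inv b, hb]; group⟩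

def quotientEquivSwap (H K : Subgroup G) : Quotient (H : Set G) K ≃ Quotient (K : Set G) H :=
  _root_.Quotient.congr (Equiv.inv G) (setoid_iff_setoid_inv H K)

lemma setoid_iff_orbitRel (H K : Subgroup G) (a b : G) :
    setoid (H : Set G) K a b ↔ orbitRel H (G ⧸ K) a b := by
  rw [rel_iff, orbitRel_apply, mem_orbit_iff]
  constructor
  · rintro ⟨h, hh, k, hk, rfl⟩
    refine ⟨⟨h⁻¹, H.inv_mem hh⟩, ?_⟩
    change ((h⁻¹ * (h * a * k) : G) : G ⧸ K) = a
    rw [QuotientGroup.eq]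
    simpa [mul_assoc] using K.inv_mem hk
  · rintro ⟨⟨h, hh⟩, hb⟩
    change ((h * b : G) : G ⧸ K) = a at hb
    rw [QuotientGroup.eq] at hb
    exact ⟨h⁻¹, H.inv_mem hh, _, K.inv_mem hb, by group⟩

noncomputable def quotientEquivOrbitRelQuotient (H K : Subgroup G) :
    Quotient (H : Set G) K ≃ orbitRel.Quotient H (G ⧸ K) :=
  (_root_.Quotient.congrRight fun a b => (setoid_iff_orbitRel H K a b).trans
      (Quotient.eq (r := orbitRel H (G ⧸ K))).symm).trans
    (Setoid.quotientKerEquivOfSurjective _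
      (Quotient.mk_surjective.comp QuotientGroup.mk_surjective))

end DoubleCoset

theorem card_right_cosets_eq_card_double_cosets_mul_general (G : Type*) [Group G]
    (H K : Subgroup G)
    (hInt : ∀ t : G, Subgroup.map (MulAut.conj t).toMonoidHom H ⊓ K = Subgroup.center G) :
    Nat.card (Quotient (QuotientGroup.rightRel H)) =
      Nat.card (DoubleCoset.Quotient (H : Set G) (K : Set G)) *
        ((Subgroup.center G).relIndex K) := by
  have hstab : ∀ x : G ⧸ H, MulAction.stabilizer K x = (Subgroup.center G).subgroupOf K := by
    intro x
    obtain ⟨t, rfl⟩ := QuotientGroup.mk_surjective x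
    calc MulAction.stabilizer K (t : G ⧸ H)
          = (MulAction.stabilizer G (t : G ⧸ H)).subgroupOf K := rfl
      _ = (H.map (MulAut.conj t).toMonoidHom ⊓ K).subgroupOf K := by
        rw [MulAction.stabilizer_quotient_mk, Subgroup.inf_subgroupOf_right]
      _ = (Subgroup.center G).subgroupOf K := by rw [hInt]
  calc Nat.card (Quotient (QuotientGroup.rightRel H))
      = Nat.card (MulAction.orbitRel.Quotient K (G ⧸ H) ×
          K ⧸ (Subgroup.center G).subgroupOf K) :=
        Nat.card_congr ((QuotientGroup.quotientRightRelEquivQuotientLeftRel H).trans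
          (MulAction.equivOrbitRelQuotientProdOfStabilizerEq hstab))
    _ = Nat.card (DoubleCoset.Quotient (H : Set G) (K : Set G)) *
        ((Subgroup.center G).relIndex K) := by
      rw [Nat.card_prod, ← Nat.card_congr ((DoubleCoset.quotientEquivSwap H K).trans
        (DoubleCoset.quotientEquivOrbitRelQuotient K H))]
      rfl

theorem card_right_cosets_eq_card_double_cosets_mul (G : Type*) [Group G] [Fintype G]
    (H K : Subgroup G)
    (hH : Subgroup.center G ≤ H) (hK : Subgroup.center G ≤ K)
    (hInt : ∀ t : G, Subgroup.map (MulAut.conj t).toMonoidHom H ⊓ K = Subgroup.center G) :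
    Nat.card (Quotient (QuotientGroup.rightRel H)) =
      Nat.card (DoubleCoset.Quotient (H : Set G) (K : Set G)) *
        ((Subgroup.center G).relIndex K) :=
  card_right_cosets_eq_card_double_cosets_mul_general G H K hInt
end

section
/- Let a, b ∈ F× with a ≠ b and let T be the subgroup of GL₃(F) consisting of invertible matrices of the form [[x, y, 0], [w, z, 0], [0, 0, t]] (with xz − yw ≠ 0 and t ≠ 0); T is the centralizer in GL₃(F) of the matrix diag(a, a, b). Then the set {(u + d, v + d²) : u, v ∈ F} is a fundamental domain for the action of T on H_q: for every (α, β) ∈ H_q there exists a unique pair (u, v) ∈ F × F such that (α, β) lies in the T-orbit of (u + d, v + d²). -/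
open Matrix Polynomial

theorem Matrix.mul_diagonal_eq_diagonal_mul_iff {n R : Type*} [Fintype n] [DecidableEq n]
    [CommRing R] [NoZeroDivisors R] (M : Matrix n n R) (v : n → R) :
    M * diagonal v = diagonal v * M ↔ ∀ i j, v i ≠ v j → M i j = 0 := by
  simp only [← Matrix.ext_iff, mul_diagonal, diagonal_mul]
  refine forall₂_congr fun i j => ⟨fun h hv => ?_, fun h => ?_⟩
  · have : M i j * (v j - v i) = 0 := by linear_combination h
    exact (mul_eq_zero.mp this).resolve_right (sub_ne_zero.mpr (Ne.symm hv))
  · by_cases hv : v i = v j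
    · rw [hv, mul_comm]
    · simp [h hv]

/-- The defining condition of the subgroup `T`. -/
def IsBlockDiagTwoOne {F : Type*} [Zero F] (M : Matrix (Fin 3) (Fin 3) F) : Prop :=
  M 0 2 = 0 ∧ M 1 2 = 0 ∧ M 2 0 = 0 ∧ M 2 1 = 0

theorem IsBlockDiagTwoOne.det_eq {F : Type*} [CommRing F] {M : Matrix (Fin 3) (Fin 3) F}
    (hM : IsBlockDiagTwoOne M) : M.det = (M 0 0 * M 1 1 - M 0 1 * M 1 0) * M 2 2 := by
  obtain ⟨h02, h12, h20, h21⟩ := hM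
  rw [det_fin_three, h02, h12, h20, h21]
  ring

theorem mul_diag_aab_eq_diag_aab_mul_iff {F : Type*} [Field F] {a b : F} (hab : a ≠ b)
    (M : Matrix (Fin 3) (Fin 3) F) :
    M * !![a, 0, 0; 0, a, 0; 0, 0, b] = !![a, 0, 0; 0, a, 0; 0, 0, b] * M ↔
      IsBlockDiagTwoOne M := by
  rw [← diagonal_vec3, mul_diagonal_eq_diagonal_mul_iff]
  simp [Fin.forall_fin_succ, hab, hab.symm, IsBlockDiagTwoOne]

theorem existsUnique_linear_system_of_det_ne_zero {F : Type*} [Field F] {a₀ a₁ a₂ b₀ b₁ b₂ : F}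
    (hdet : a₁ * b₂ - a₂ * b₁ ≠ 0) :
    ∃! uv : F × F, a₁ * uv.1 + a₂ * uv.2 = a₀ ∧ b₁ * uv.1 + b₂ * uv.2 = b₀ := by
  refine ⟨((a₀ * b₂ - a₂ * b₀) / (a₁ * b₂ - a₂ * b₁),
    (a₁ * b₀ - a₀ * b₁) / (a₁ * b₂ - a₂ * b₁)), ⟨?_, ?_⟩, ?_⟩
  · rw [mul_div_assoc', mul_div_assoc', ← add_div, div_eq_iff hdet]
    ring
  · rw [mul_div_assoc', mul_div_assoc', ← add_div, div_eq_iff hdet]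
    ring
  · rintro ⟨u, v⟩ ⟨h₁, h₂⟩
    ext
    · rw [eq_div_iff hdet]
      linear_combination b₂ * h₁ - a₂ * h₂
    · rw [eq_div_iff hdet]
      linear_combination a₁ * h₂ - b₁ * h₁

section

variable {F E : Type*} [Field F] [Field E] [Algebra F E]

theorem LinearIndependent.eq_zero_of_add_mul_add_mul_eq_zero {x y : E}
    (hxy : LinearIndependent F ![1, x, y]) {c₀ c₁ c₂ : F}
    (h : algebraMap F E c₀ + algebraMap F E c₁ * x + algebraMap F E c₂ * y = 0) :
    c₀ = 0 ∧ c₁ = 0 ∧ c₂ = 0 := by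
  have hc := Fintype.linearIndependent_iff.mp hxy ![c₀, c₁, c₂]
    (by simpa [Fin.sum_univ_three, Algebra.smul_def] using h)
  exact ⟨hc 0, hc 1, hc 2⟩

theorem linearIndependent_one_self_sq_of_pow_three_eq {δ : F} (hδ : ¬∃ x : F, x ^ 3 = δ)
    {d : E} (hd : d ^ 3 = algebraMap F E δ) : LinearIndependent F ![1, d, d ^ 2] := by
  have hmin : minpoly F d = X ^ 3 - C δ :=
    (minpoly.eq_of_irreducible_of_monic
      (X_pow_sub_C_irreducible_of_prime Nat.prime_three fun x hx => hδ ⟨x, hx⟩)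
      (by simp [hd]) (monic_X_pow_sub_C δ three_ne_zero)).symm
  have hdeg : (minpoly F d).natDegree = 3 := by
    rw [hmin, natDegree_X_pow_sub_C]
  convert (linearIndependent_pow (K := F) d).comp (finCongr hdeg.symm)
    (finCongr hdeg.symm).injective using 1
  ext i
  fin_cases i <;> simp

theorem exists_eq_add_mul_add_mul_sq (h3 : Module.finrank F E = 3) {d : E}
    (hd : LinearIndependent F ![1, d, d ^ 2]) (e : E) :
    ∃ c₀ c₁ c₂ : F,
      e = algebraMap F E c₀ + algebraMap F E c₁ * d + algebraMap F E c₂ * d ^ 2 := by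
  have : FiniteDimensional F E := .of_finrank_pos (by omega)
  have hspan := hd.span_eq_top_of_card_eq_finrank (by simp [h3])
  obtain ⟨c, hc⟩ :=
    (Submodule.mem_span_range_iff_exists_fun F).mp (hspan ▸ Submodule.mem_top (x := e))
  refine ⟨c 0, c 1, c 2, ?_⟩
  rw [← hc]
  simp [Fin.sum_univ_three, Algebra.smul_def]

theorem mul_sub_mul_ne_zero_of_linearIndependent {d α β : E} {a₀ a₁ a₂ b₀ b₁ b₂ : F}
    (hα : α = algebraMap F E a₀ + algebraMap F E a₁ * d + algebraMap F E a₂ * d ^ 2)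
    (hβ : β = algebraMap F E b₀ + algebraMap F E b₁ * d + algebraMap F E b₂ * d ^ 2)
    (hαβ : LinearIndependent F ![1, α, β]) : a₁ * b₂ - a₂ * b₁ ≠ 0 := by
  intro hdet
  -- a vanishing determinant makes `b₂ α - a₂ β` and `b₁ α - a₁ β` constants, forcing `α ∈ F`
  have hdetE := congrArg (algebraMap F E) hdet
  simp only [map_sub, map_mul, map_zero] at hdetE
  obtain ⟨-, -, ha₂⟩ := hαβ.eq_zero_of_add_mul_add_mul_eq_zero (c₀ := a₂ * b₀ - b₂ * a₀)
    (c₁ := b₂) (c₂ := -a₂)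
    (by simp only [map_sub, map_mul, map_neg, hα, hβ]; linear_combination d * hdetE)
  obtain ⟨-, -, ha₁⟩ := hαβ.eq_zero_of_add_mul_add_mul_eq_zero (c₀ := a₁ * b₀ - b₁ * a₀)
    (c₁ := b₁) (c₂ := -a₁)
    (by simp only [map_sub, map_mul, map_neg, hα, hβ]; linear_combination -d ^ 2 * hdetE)
  obtain ⟨-, h, -⟩ := hαβ.eq_zero_of_add_mul_add_mul_eq_zero (c₀ := a₀) (c₁ := -1) (c₂ := 0)
    (by simp [hα, neg_eq_zero.mp ha₁, neg_eq_zero.mp ha₂])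
  exact one_ne_zero (neg_eq_zero.mp h)

theorem mact_of_isBlockDiagTwoOne {M : Matrix (Fin 3) (Fin 3) F} (hM : IsBlockDiagTwoOne M)
    (z : E × E) :
    mact F E M z = ((algebraMap F E (M 0 0) * z.1 + algebraMap F E (M 0 1) * z.2) /
        algebraMap F E (M 2 2),
      (algebraMap F E (M 1 0) * z.1 + algebraMap F E (M 1 1) * z.2) /
        algebraMap F E (M 2 2)) := by
  obtain ⟨h02, h12, h20, h21⟩ := hM
  simp [mact, mden, h02, h12, h20, h21]

theorem mul_add_mul_eq_of_div_eq {d : E} (hd : LinearIndependent F ![1, d, d ^ 2])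
    {m₀ m₁ t u v c₀ c₁ c₂ : F} (ht : t ≠ 0)
    (h : (algebraMap F E m₀ * (algebraMap F E u + d) +
        algebraMap F E m₁ * (algebraMap F E v + d ^ 2)) / algebraMap F E t =
      algebraMap F E c₀ + algebraMap F E c₁ * d + algebraMap F E c₂ * d ^ 2) :
    c₁ * u + c₂ * v = c₀ := by
  rw [div_eq_iff (by simpa using ht)] at h
  obtain ⟨h₀, h₁, h₂⟩ := hd.eq_zero_of_add_mul_add_mul_eq_zero
    (c₀ := m₀ * u + m₁ * v - c₀ * t) (c₁ := m₀ - c₁ * t) (c₂ := m₁ - c₂ * t)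
    (by simp only [map_sub, map_add, map_mul]; linear_combination h)
  refine mul_right_cancel₀ ht ?_
  linear_combination h₀ - u * h₁ - v * h₂

theorem exists_mact_eq_iff {d : E} (hd : LinearIndependent F ![1, d, d ^ 2]) {z : E × E}
    {a₀ a₁ a₂ b₀ b₁ b₂ : F}
    (hα : z.1 = algebraMap F E a₀ + algebraMap F E a₁ * d + algebraMap F E a₂ * d ^ 2)
    (hβ : z.2 = algebraMap F E b₀ + algebraMap F E b₁ * d + algebraMap F E b₂ * d ^ 2)
    (hdet : a₁ * b₂ - a₂ * b₁ ≠ 0) (u v : F) :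
    (∃ m : GL (Fin 3) F, IsBlockDiagTwoOne m.val ∧
        mact F E m.val (algebraMap F E u + d, algebraMap F E v + d ^ 2) = z) ↔
      a₁ * u + a₂ * v = a₀ ∧ b₁ * u + b₂ * v = b₀ := by
  constructor
  · rintro ⟨m, hm, hmz⟩
    have ht : m.val 2 2 ≠ 0 := fun ht => m.det_ne_zero (by rw [hm.det_eq, ht, mul_zero])
    rw [mact_of_isBlockDiagTwoOne hm, Prod.ext_iff, hα, hβ] at hmz
    exact ⟨mul_add_mul_eq_of_div_eq hd ht hmz.1, mul_add_mul_eq_of_div_eq hd ht hmz.2⟩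
  · rintro ⟨hu, hv⟩
    have hM : IsBlockDiagTwoOne !![a₁, a₂, 0; b₁, b₂, 0; 0, 0, (1 : F)] := by
      simp [IsBlockDiagTwoOne]
    refine ⟨.mkOfDetNeZero _ (by simpa [hM.det_eq] using hdet), hM, ?_⟩
    rw [GeneralLinearGroup.val_mkOfDetNeZero, mact_of_isBlockDiagTwoOne hM]
    ext
    · simp [hα, ← hu]
      ring
    · simp [hβ, ← hv]
      ring

end

theorem fundamental_domain_first_hyperbolic_general (F : Type*) [Field F]
    (E : Type*) [Field E] [Algebra F E] (h3 : Module.finrank F E = 3)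
    (δ : F) (hδ : ¬∃ x : F, x ^ 3 = δ) (d : E) (hd : d ^ 3 = algebraMap F E δ)
    (a b : F) (hab : a ≠ b) :
    (∀ m : GL (Fin 3) F,
        m.val * !![a, 0, 0; 0, a, 0; 0, 0, b] = !![a, 0, 0; 0, a, 0; 0, 0, b] * m.val ↔
        (m.val 0 2 = 0 ∧ m.val 1 2 = 0 ∧ m.val 2 0 = 0 ∧ m.val 2 1 = 0)) ∧
    ∀ z ∈ UHS F E, ∃! uv : F × F, ∃ m : GL (Fin 3) F,
      (m.val 0 2 = 0 ∧ m.val 1 2 = 0 ∧ m.val 2 0 = 0 ∧ m.val 2 1 = 0) ∧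
      mact F E m.val (algebraMap F E uv.1 + d, algebraMap F E uv.2 + d ^ 2) = z := by
  refine ⟨fun m => mul_diag_aab_eq_diag_aab_mul_iff hab m.val, fun z hz => ?_⟩
  have hd₃ := linearIndependent_one_self_sq_of_pow_three_eq hδ hd
  obtain ⟨a₀, a₁, a₂, hα⟩ := exists_eq_add_mul_add_mul_sq h3 hd₃ z.1
  obtain ⟨b₀, b₁, b₂, hβ⟩ := exists_eq_add_mul_add_mul_sq h3 hd₃ z.2
  have hdet := mul_sub_mul_ne_zero_of_linearIndependent hα hβ hz
  exact (existsUnique_congr fun uv : F × F => exists_mact_eq_iff hd₃ hα hβ hdet uv.1 uv.2).mpr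
    (existsUnique_linear_system_of_det_ne_zero hdet)

theorem fundamental_domain_first_hyperbolic (F : Type*) [Field F] [Fintype F]
    (E : Type*) [Field E] [Algebra F E] (h3 : Module.finrank F E = 3)
    (δ : F) (hδ : ¬∃ x : F, x ^ 3 = δ) (d : E) (hd : d ^ 3 = algebraMap F E δ)
    (a b : F) (ha : a ≠ 0) (hb : b ≠ 0) (hab : a ≠ b) :
    (∀ m : GL (Fin 3) F,
        m.val * !![a, 0, 0; 0, a, 0; 0, 0, b] = !![a, 0, 0; 0, a, 0; 0, 0, b] * m.val ↔
        (m.val 0 2 = 0 ∧ m.val 1 2 = 0 ∧ m.val 2 0 = 0 ∧ m.val 2 1 = 0)) ∧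
    ∀ z ∈ UHS F E, ∃! uv : F × F, ∃ m : GL (Fin 3) F,
      (m.val 0 2 = 0 ∧ m.val 1 2 = 0 ∧ m.val 2 0 = 0 ∧ m.val 2 1 = 0) ∧
      mact F E m.val (algebraMap F E uv.1 + d, algebraMap F E uv.2 + d ^ 2) = z :=
  fundamental_domain_first_hyperbolic_general F E h3 δ hδ d hd a b hab
end

section
/- Let G_γ be the subgroup of GL₃(F) consisting of invertible matrices of the form [[t, y, x], [0, c, b], [0, 0, t]] with t, c ∈ F× and b, x, y ∈ F (this is the centralizer in GL₃(F) of the matrix [[a, 0, a], [0, a, 0], [0, 0, a]] for a ∈ F×). Then the set {(u·d, v·d + d²) : u ∈ F×, v ∈ F} ∪ {(d + u·d², d) : u ∈ F×} is a fundamental domain for the action of G_γ on H_q: every (α, β) ∈ H_q lies in the G_γ-orbit of exactly one element of this set. -/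
/-!
In the basis `1, d, d²` of `E` (a basis because `X³ - δ` is irreducible), let `P` and `Q` be
the `(d, d²)`-coordinates of `α` and `β`; linear independence of `1, α, β` says
`det (P, Q) ≠ 0`. The matrix `[[t, y, x], [0, c, b], [0, 0, t]]` acts by `P ↦ P + (y/t) Q`,
`Q ↦ (c/t) Q`, while `x` and `b` adjust the constant terms freely. So if `Q = (q₁, 0)` the only
invariant is the `d²`-coordinate of `P`, realised by `(d + u d², d)`; otherwise `Q` is normalised
to `(v, 1)` and the shear clears the `d²`-coordinate of `P`, leaving `(u d, v d + d²)`.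
-/

/-- The matrices `[[t, y, x], [0, c, b], [0, 0, t]]`. -/
def IsFirstParabolic {R : Type*} [Zero R] (m : Matrix (Fin 3) (Fin 3) R) : Prop :=
  m 1 0 = 0 ∧ m 2 0 = 0 ∧ m 2 1 = 0 ∧ m 2 2 = m 0 0

theorem commute_iff_isFirstParabolic {R : Type*} [CommRing R] [IsDomain R] {a : R}
    (ha : a ≠ 0) (m : Matrix (Fin 3) (Fin 3) R) :
    m * !![a, 0, a; 0, a, 0; 0, 0, a] = !![a, 0, a; 0, a, 0; 0, 0, a] * m ↔
      IsFirstParabolic m := by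
  simp only [← Matrix.ext_iff, Fin.forall_fin_succ, Matrix.mul_apply, Fin.sum_univ_three,
    IsFirstParabolic]
  simp only [Matrix.of_apply, Matrix.cons_val', Matrix.cons_val_zero, Matrix.cons_val_fin_one,
    mul_comm _ a, Matrix.cons_val_one, mul_zero, add_zero, Matrix.cons_val, zero_mul, ← mul_add,
    add_comm (m 0 0), mul_eq_mul_left_iff, eq_comm (a := m 0 0), add_eq_right, ha, or_false,
    Fin.succ_zero_eq_one, zero_add, left_eq_add, Fin.succ_one_eq_two, add_right_inj,
    Matrix.cons_val_succ, IsEmpty.forall_iff, and_true, true_and]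
  tauto

theorem IsFirstParabolic.det_eq {R : Type*} [CommRing R] {m : Matrix (Fin 3) (Fin 3) R}
    (hm : IsFirstParabolic m) : m.det = m 0 0 ^ 2 * m 1 1 := by
  obtain ⟨h10, h20, h21, h22⟩ := hm
  rw [Matrix.det_fin_three, h10, h20, h21, h22]
  ring

theorem IsFirstParabolic.diag_ne_zero {R : Type*} [CommRing R] [IsDomain R]
    {m : GL (Fin 3) R} (hm : IsFirstParabolic m.val) : m.val 0 0 ≠ 0 ∧ m.val 1 1 ≠ 0 := by
  have hdet := m.det_ne_zero
  rwa [hm.det_eq, mul_ne_zero_iff, pow_ne_zero_iff two_ne_zero] at hdet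

section Action

variable {F : Type*} [Field F] {E : Type*} [Field E] [Algebra F E]

theorem mact_eq_iff_of_isFirstParabolic {m : Matrix (Fin 3) (Fin 3) F}
    (hm : IsFirstParabolic m) (h00 : m 0 0 ≠ 0) {w z : E × E} :
    mact F E m w = z ↔
      algebraMap F E (m 0 0) * z.1 =
          algebraMap F E (m 0 0) * w.1 + algebraMap F E (m 0 1) * w.2 + algebraMap F E (m 0 2) ∧
        algebraMap F E (m 0 0) * z.2 = algebraMap F E (m 1 1) * w.2 + algebraMap F E (m 1 2) := by
  obtain ⟨h10, h20, h21, h22⟩ := hm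
  have hden : mden F E m w = algebraMap F E (m 0 0) := by simp [mden, h20, h21, h22]
  have hne : algebraMap F E (m 0 0) ≠ 0 := (map_ne_zero _).mpr h00
  rw [mact, hden, Prod.ext_iff, div_eq_iff hne, div_eq_iff hne, h10, map_zero, zero_mul,
    zero_add, mul_comm _ z.1, mul_comm _ z.2, eq_comm, eq_comm (b := z.2 * _)]

theorem exists_isFirstParabolic_mact_eq {w z : E × E} {x y b c : F} (hc : c ≠ 0)
    (h1 : z.1 = w.1 + algebraMap F E y * w.2 + algebraMap F E x)
    (h2 : z.2 = algebraMap F E c * w.2 + algebraMap F E b) :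
    ∃ m : GL (Fin 3) F, IsFirstParabolic m.val ∧ mact F E m.val w = z := by
  have hm : IsFirstParabolic !![1, y, x; 0, c, b; 0, 0, 1] := ⟨rfl, rfl, rfl, rfl⟩
  refine ⟨.mkOfDetNeZero _ (by simpa [hm.det_eq] using hc), hm, ?_⟩
  rw [Matrix.GeneralLinearGroup.val_mkOfDetNeZero, mact_eq_iff_of_isFirstParabolic hm one_ne_zero]
  simp [h1, h2]

end Action

section Coordinates

variable {F : Type*} [Field F] {E : Type*} [Field E] [Algebra F E]

theorem linearIndependent_pow_of_pow_three_eq {δ : F} (hδ : ¬∃ x : F, x ^ 3 = δ) {d : E}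
    (hd : d ^ 3 = algebraMap F E δ) : LinearIndependent F fun i : Fin 3 => d ^ (i : ℕ) := by
  have hirr : Irreducible (Polynomial.X ^ 3 - Polynomial.C δ) :=
    X_pow_sub_C_irreducible_of_prime Nat.prime_three fun b hb => hδ ⟨b, hb⟩
  have hmin : minpoly F d = Polynomial.X ^ 3 - Polynomial.C δ :=
    (minpoly.eq_of_irreducible_of_monic hirr (by simp [hd])
      (Polynomial.monic_X_pow_sub_C δ three_ne_zero)).symm
  have hdeg : (minpoly F d).natDegree = 3 := by
    rw [hmin, Polynomial.natDegree_X_pow_sub_C]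
  exact hdeg ▸ linearIndependent_pow d

theorem exists_basis_pow_of_pow_three_eq (h3 : Module.finrank F E = 3) {δ : F}
    (hδ : ¬∃ x : F, x ^ 3 = δ) {d : E} (hd : d ^ 3 = algebraMap F E δ) :
    ∃ B : Module.Basis (Fin 3) F E, ∀ i, B i = d ^ (i : ℕ) :=
  have hcard : Fintype.card (Fin 3) = Module.finrank F E := by simp [h3]
  ⟨basisOfLinearIndependentOfCardEqFinrank (linearIndependent_pow_of_pow_three_eq hδ hd) hcard,
    by simp⟩

namespace Module.Basis

variable (B : Module.Basis (Fin 3) F E) (hB0 : B 0 = 1)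
include hB0

theorem repr_det_ne_zero_of_linearIndependent {α β : E} (h : LinearIndependent F ![1, α, β]) :
    B.repr α 1 * B.repr β 2 - B.repr α 2 * B.repr β 1 ≠ 0 := by
  have hspan := h.span_eq_top_of_card_eq_finrank (by simp [Module.finrank_eq_card_basis B])
  have hdet := (B.is_basis_iff_det.mp ⟨h, hspan⟩).ne_zero
  simpa [B.det_apply, Matrix.det_fin_three, Module.Basis.toMatrix_apply, ← hB0,
    mul_comm (B.repr β 1)] using hdet

theorem repr_of_mact_eq {m : GL (Fin 3) F} (hm : IsFirstParabolic m.val) {w z : E × E}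
    (h : mact F E m.val w = z) {i : Fin 3} (hi : i ≠ 0) :
    m.val 0 0 * B.repr z.1 i = m.val 0 0 * B.repr w.1 i + m.val 0 1 * B.repr w.2 i ∧
      m.val 0 0 * B.repr z.2 i = m.val 1 1 * B.repr w.2 i := by
  obtain ⟨e1, e2⟩ := (mact_eq_iff_of_isFirstParabolic hm hm.diag_ne_zero.1).mp h
  constructor
  · simpa [B.repr_smul', B.repr_algebraMap hB0, hi] using congr(B.repr $e1 i)
  · simpa [B.repr_smul', B.repr_algebraMap hB0, hi] using congr(B.repr $e2 i)

end Module.Basis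

end Coordinates

section Representatives

variable {F : Type*} [Field F] {E : Type*} [Field E] [Algebra F E]

def firstParabolicDomain (F : Type*) [Field F] [Algebra F E] (d : E) : Set (E × E) :=
  {z' | ∃ u v : F, u ≠ 0 ∧ z' = (algebraMap F E u * d, algebraMap F E v * d + d ^ 2)} ∪
    {z' | ∃ u : F, u ≠ 0 ∧ z' = (d + algebraMap F E u * d ^ 2, d)}

open Classical in
noncomputable def firstParabolicRep (B : Module.Basis (Fin 3) F E) (d : E) (z : E × E) :
    E × E :=
  if B.repr z.2 2 = 0 then (d + algebraMap F E (B.repr z.1 2) * d ^ 2, d)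
  else
    (algebraMap F E
        ((B.repr z.1 1 * B.repr z.2 2 - B.repr z.1 2 * B.repr z.2 1) / B.repr z.2 2) * d,
      algebraMap F E (B.repr z.2 1 / B.repr z.2 2) * d + d ^ 2)

variable (B : Module.Basis (Fin 3) F E) {d : E} (hB : ∀ i, B i = d ^ (i : ℕ))
include hB

theorem basis_zero_eq_one : B 0 = 1 := by simp [hB]

theorem repr_pow_eq_single :
    B.repr d = Finsupp.single 1 1 ∧ B.repr (d ^ 2) = Finsupp.single 2 1 := by
  constructor <;> rw [← B.repr_self, hB] <;> simp

theorem firstParabolicRep_mem {z : E × E} (hz : z ∈ UHS F E) :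
    firstParabolicRep B d z ∈ firstParabolicDomain F d := by
  have hD := B.repr_det_ne_zero_of_linearIndependent (basis_zero_eq_one B hB) hz
  unfold firstParabolicRep
  split_ifs with hb2
  · rw [hb2, mul_zero, zero_sub, neg_ne_zero] at hD
    exact Or.inr ⟨_, left_ne_zero_of_mul hD, rfl⟩
  · exact Or.inl ⟨_, _, div_ne_zero hD hb2, rfl⟩

theorem exists_mact_firstParabolicRep {z : E × E} (hz : z ∈ UHS F E) :
    ∃ m : GL (Fin 3) F,
      IsFirstParabolic m.val ∧ mact F E m.val (firstParabolicRep B d z) = z := by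
  have hB0 := basis_zero_eq_one B hB
  have hD := B.repr_det_ne_zero_of_linearIndependent hB0 hz
  obtain ⟨hd, hd2⟩ := repr_pow_eq_single B hB
  unfold firstParabolicRep
  split_ifs with hb2
  · rw [hb2, mul_zero, zero_sub, neg_ne_zero] at hD
    refine exists_isFirstParabolic_mact_eq (y := B.repr z.1 1 - 1) (x := B.repr z.1 0)
      (b := B.repr z.2 0) (right_ne_zero_of_mul hD) ?_ ?_ <;>
      refine B.ext_elem fun i => ?_ <;> fin_cases i <;>
      simp [B.repr_smul', B.repr_algebraMap hB0, hd, hd2, hb2, sub_mul]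
  · refine exists_isFirstParabolic_mact_eq (y := B.repr z.1 2) (x := B.repr z.1 0)
      (b := B.repr z.2 0) hb2 ?_ ?_ <;>
      refine B.ext_elem fun i => ?_ <;> fin_cases i <;>
      simp [B.repr_smul', B.repr_algebraMap hB0, hd, hd2, -map_div₀, -map_mul, -map_sub]
    · field_simp
      ring
    · field_simp

theorem eq_firstParabolicRep_of_mact_eq {w z : E × E} (hw : w ∈ firstParabolicDomain F d)
    {m : GL (Fin 3) F} (hm : IsFirstParabolic m.val) (h : mact F E m.val w = z) :
    w = firstParabolicRep B d z := by
  have hB0 := basis_zero_eq_one B hB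
  obtain ⟨ht, hc⟩ := hm.diag_ne_zero
  obtain ⟨ha1, hb1⟩ := B.repr_of_mact_eq hB0 hm h one_ne_zero
  obtain ⟨ha2, hb2⟩ := B.repr_of_mact_eq hB0 hm h (by decide : (2 : Fin 3) ≠ 0)
  obtain ⟨hd, hd2⟩ := repr_pow_eq_single B hB
  rcases hw with ⟨u, v, -, rfl⟩ | ⟨u, -, rfl⟩
  · simp only [B.repr_smul', map_add, hd, hd2, Finsupp.coe_add, Pi.add_apply,
      Finsupp.single_eq_same, ne_eq, Fin.reduceEq, not_false_eq_true, Finsupp.single_eq_of_ne,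
      mul_one, mul_zero, add_zero, zero_add] at ha1 hb1 ha2 hb2
    have hb2' : B.repr z.2 2 ≠ 0 := fun h0 => hc (by rw [← hb2, h0, mul_zero])
    have hv : B.repr z.2 2 * v = B.repr z.2 1 :=
      mul_left_cancel₀ ht (by linear_combination v * hb2 - hb1)
    have hu : B.repr z.2 2 * u = B.repr z.1 1 * B.repr z.2 2 - B.repr z.1 2 * B.repr z.2 1 :=
      mul_left_cancel₀ ht
        (by linear_combination -B.repr z.2 2 * ha1 + B.repr z.2 1 * ha2 - m.val 0 1 * hv)
    rw [firstParabolicRep, if_neg hb2', ← hu, ← hv, mul_div_cancel_left₀ _ hb2',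
      mul_div_cancel_left₀ _ hb2']
  · simp only [B.repr_smul', map_add, hd, hd2, Finsupp.coe_add, Pi.add_apply,
      Finsupp.single_eq_same, ne_eq, Fin.reduceEq, not_false_eq_true, Finsupp.single_eq_of_ne,
      mul_one, mul_zero, add_zero, zero_add, mul_eq_zero, mul_eq_mul_left_iff, ht, or_false,
      false_or] at ha2 hb2
    rw [firstParabolicRep, if_pos hb2, ha2]

end Representatives

theorem fundamental_domain_first_parabolic_general (F : Type*) [Field F]
    (E : Type*) [Field E] [Algebra F E] (h3 : Module.finrank F E = 3)
    (δ : F) (hδ : ¬∃ x : F, x ^ 3 = δ) (d : E) (hd : d ^ 3 = algebraMap F E δ) :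
    (∀ a : F, a ≠ 0 → ∀ m : GL (Fin 3) F,
        m.val * !![a, 0, a; 0, a, 0; 0, 0, a] = !![a, 0, a; 0, a, 0; 0, 0, a] * m.val ↔
        (m.val 1 0 = 0 ∧ m.val 2 0 = 0 ∧ m.val 2 1 = 0 ∧ m.val 2 2 = m.val 0 0)) ∧
    ∀ z ∈ UHS F E, ∃! w : E × E,
      (w ∈ {z' : E × E | ∃ u v : F, u ≠ 0 ∧
              z' = (algebraMap F E u * d, algebraMap F E v * d + d ^ 2)} ∪
            {z' : E × E | ∃ u : F, u ≠ 0 ∧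
              z' = (d + algebraMap F E u * d ^ 2, d)}) ∧
      ∃ m : GL (Fin 3) F,
        (m.val 1 0 = 0 ∧ m.val 2 0 = 0 ∧ m.val 2 1 = 0 ∧ m.val 2 2 = m.val 0 0) ∧
        mact F E m.val w = z := by
  refine ⟨fun a ha m => commute_iff_isFirstParabolic ha m.val, fun z hz => ?_⟩
  obtain ⟨B, hB⟩ := exists_basis_pow_of_pow_three_eq h3 hδ hd
  refine ⟨firstParabolicRep B d z,
    ⟨firstParabolicRep_mem B hB hz, exists_mact_firstParabolicRep B hB hz⟩, ?_⟩
  rintro w ⟨hw, m, hm, h⟩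
  exact eq_firstParabolicRep_of_mact_eq B hB hw hm h

theorem fundamental_domain_first_parabolic (F : Type*) [Field F] [Fintype F]
    (E : Type*) [Field E] [Algebra F E] (h3 : Module.finrank F E = 3)
    (δ : F) (hδ : ¬∃ x : F, x ^ 3 = δ) (d : E) (hd : d ^ 3 = algebraMap F E δ) :
    (∀ a : F, a ≠ 0 → ∀ m : GL (Fin 3) F,
        m.val * !![a, 0, a; 0, a, 0; 0, 0, a] = !![a, 0, a; 0, a, 0; 0, 0, a] * m.val ↔
        (m.val 1 0 = 0 ∧ m.val 2 0 = 0 ∧ m.val 2 1 = 0 ∧ m.val 2 2 = m.val 0 0)) ∧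
    ∀ z ∈ UHS F E, ∃! w : E × E,
      (w ∈ {z' : E × E | ∃ u v : F, u ≠ 0 ∧
              z' = (algebraMap F E u * d, algebraMap F E v * d + d ^ 2)} ∪
            {z' : E × E | ∃ u : F, u ≠ 0 ∧
              z' = (d + algebraMap F E u * d ^ 2, d)}) ∧
      ∃ m : GL (Fin 3) F,
        (m.val 1 0 = 0 ∧ m.val 2 0 = 0 ∧ m.val 2 1 = 0 ∧ m.val 2 2 = m.val 0 0) ∧
        mact F E m.val w = z :=
  fundamental_domain_first_parabolic_general F E h3 δ hδ d hd
end

section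
/- Let φ : E× → GL₃(F) be the injective group homomorphism sending ξ ∈ E× to the matrix of the F-linear map x ↦ ξx of E in the basis (1, d, d²). Then for ξ, η ∈ E×, the matrices φ(ξ) and φ(η) are conjugate in GL₃(F) if and only if η ∈ {ξ, ξ^q, ξ^{q²}}. In particular, a non-central element of the image of φ has exactly three conjugates lying in the image of φ. -/
/-!
Since `x ↦ leftMulMatrix B x` is an injective `F`-algebra map, conjugate matrices have the same
minimal polynomial, so `ξ` and `η` are conjugate roots over `F`; conversely an automorphism `σ`
with `σ ξ = η` is an `F`-linear change of basis conjugating the two matrices. The Galois group of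
`E/F` is generated by the Frobenius `x ↦ x ^ q` and has order `[E : F] = 3`, a prime, so the
stabilizer of `ξ ∉ F` is trivial and its orbit `{ξ, ξ ^ q, ξ ^ q ^ 2}` has exactly three elements.
-/

open Module

section
variable {R S ι : Type*} [CommRing R] [Ring S] [Algebra R S] [Fintype ι] [DecidableEq ι]

theorem isConjRoot_units_conj (P : Sˣ) (a : S) : IsConjRoot R (P * a * P⁻¹ : S) a := by
  simpa [ConjAct.units_smul_def] using
    isConjRoot_of_algEquiv' a (MulSemiringAction.toAlgEquiv R S (ConjAct.toConjAct P))

theorem Algebra.exists_leftMulMatrix_algEquiv_apply_eq_conj (b : Basis ι R S)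
    (σ : S ≃ₐ[R] S) (x : S) :
    ∃ P : GL ι R, leftMulMatrix b (σ x) = P * leftMulMatrix b x * P⁻¹ := by
  let u := LinearMap.GeneralLinearGroup.ofLinearEquiv σ.toLinearEquiv
  have hconj : lmul R S (σ x) = u * lmul R S x * ↑u⁻¹ := by
    ext z
    simp [u, ← LinearMap.GeneralLinearGroup.ofLinearEquiv_inv]
  refine ⟨Units.map (LinearMap.toMatrixAlgEquiv b).toMonoidHom u, ?_⟩
  change LinearMap.toMatrixAlgEquiv b (lmul R S (σ x)) = _
  rw [hconj, map_mul, map_mul]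
  rfl

end

section
variable {K L ι : Type*} [Field K] [Field L] [Algebra K L] [Fintype ι] [DecidableEq ι]

theorem Algebra.exists_leftMulMatrix_eq_conj_iff_isConjRoot [Normal K L] (b : Basis ι K L)
    (x y : L) :
    (∃ P : GL ι K, leftMulMatrix b y = P * leftMulMatrix b x * P⁻¹) ↔ IsConjRoot K x y := by
  constructor
  · rintro ⟨P, hP⟩
    have hmat : IsConjRoot K (leftMulMatrix b y) (leftMulMatrix b x) :=
      hP ▸ isConjRoot_units_conj P _
    exact ((isConjRoot_algHom_iff_of_injective (leftMulMatrix_injective b)).mp hmat).symm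
  · intro h
    obtain ⟨σ, rfl⟩ := h.symm.exists_algEquiv
    exact exists_leftMulMatrix_algEquiv_apply_eq_conj b σ x

theorem Algebra.setOf_leftMulMatrix_units_conj_eq_image_orbit [Normal K L] (b : Basis ι K L)
    (ξ : Lˣ) :
    {N | (∃ η : Lˣ, N = leftMulMatrix b η) ∧ ∃ P : GL ι K, N = P * leftMulMatrix b ξ * P⁻¹} =
      leftMulMatrix b '' MulAction.orbit Gal(L/K) (ξ : L) := by
  ext N
  constructor
  · rintro ⟨⟨η, rfl⟩, P, hP⟩
    exact ⟨η, isConjRoot_iff_orbitRel.mp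
      ((exists_leftMulMatrix_eq_conj_iff_isConjRoot b _ _).mp ⟨P, hP⟩).symm, rfl⟩
  · rintro ⟨η, hη, rfl⟩
    have hconj : IsConjRoot K (ξ : L) η := (isConjRoot_iff_orbitRel.mpr hη).symm
    exact ⟨⟨Units.mk0 η (hconj.ne_zero ξ.ne_zero), rfl⟩,
      (exists_leftMulMatrix_eq_conj_iff_isConjRoot b _ _).mpr hconj⟩

theorem IsGalois.ncard_orbit_eq_finrank [FiniteDimensional K L] [IsGalois K L]
    (hprime : (finrank K L).Prime) {x : L} (hx : x ∉ Set.range (algebraMap K L)) :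
    (MulAction.orbit Gal(L/K) x).ncard = finrank K L := by
  have : Fact (Nat.card Gal(L/K)).Prime := ⟨card_aut_eq_finrank K L ▸ hprime⟩
  rw [← MulAction.index_stabilizer]
  rcases (MulAction.stabilizer Gal(L/K) x).eq_bot_or_eq_top_of_prime_card with h | h
  · rw [h, Subgroup.index_bot, card_aut_eq_finrank]
  · refine absurd ((mem_range_algebraMap_iff_fixed x).mpr fun f => ?_) hx
    exact MulAction.mem_stabilizer_iff.mp (h ▸ Subgroup.mem_top f)

theorem FiniteField.isConjRoot_iff_exists_pow_card_pow [Fintype K] [Finite L] {x y : L} :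
    IsConjRoot K x y ↔ ∃ i < finrank K L, y = x ^ Fintype.card K ^ i := by
  rw [IsConjRoot.comm, isConjRoot_iff_exists_algEquiv]
  constructor
  · rintro ⟨σ, rfl⟩
    obtain ⟨i, rfl⟩ := (bijective_frobeniusAlgEquivOfAlgebraic_pow K L).2 σ
    exact ⟨i, i.2, by simp [AlgEquiv.coe_pow, coe_frobeniusAlgEquivOfAlgebraic_iterate]⟩
  · rintro ⟨i, -, rfl⟩
    exact ⟨frobeniusAlgEquivOfAlgebraic K L ^ i,
      by simp [AlgEquiv.coe_pow, coe_frobeniusAlgEquivOfAlgebraic_iterate]⟩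

end

theorem conjugate_in_GL_iff_galois_conjugate_general (F : Type*) [Field F] [Fintype F]
    (E : Type*) [Field E] [Fintype E] [Algebra F E]
    (h3 : Module.finrank F E = 3)
    (B : Module.Basis (Fin 3) F E)
    (q : ℕ) (hq : Fintype.card F = q) :
    (∀ ξ η : Eˣ,
        (∃ P : GL (Fin 3) F,
            LinearMap.toMatrix B B (LinearMap.mulLeft F (η : E)) =
              P.val * LinearMap.toMatrix B B (LinearMap.mulLeft F (ξ : E)) * P⁻¹.val) ↔
          ((η : E) = (ξ : E) ∨ (η : E) = (ξ : E) ^ q ∨ (η : E) = (ξ : E) ^ q ^ 2)) ∧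
    (∀ ξ : Eˣ, (ξ : E) ∉ Set.range (algebraMap F E) →
        Nat.card {N : Matrix (Fin 3) (Fin 3) F //
            (∃ η : Eˣ, N = LinearMap.toMatrix B B (LinearMap.mulLeft F (η : E))) ∧
            (∃ P : GL (Fin 3) F,
              N = P.val * LinearMap.toMatrix B B (LinearMap.mulLeft F (ξ : E)) * P⁻¹.val)} = 3) := by
  subst hq
  have hM (x : E) : LinearMap.toMatrix B B (LinearMap.mulLeft F x) = Algebra.leftMulMatrix B x :=
    rfl
  simp only [hM]
  refine ⟨fun ξ η => ?_, fun ξ hξ => ?_⟩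
  · rw [Algebra.exists_leftMulMatrix_eq_conj_iff_isConjRoot B,
      FiniteField.isConjRoot_iff_exists_pow_card_pow, h3]
    constructor
    · rintro ⟨i, hi, h⟩
      interval_cases i <;> simp [h]
    · rintro (h | h | h)
      exacts [⟨0, by simp [h]⟩, ⟨1, by simp [h]⟩, ⟨2, by simp [h]⟩]
  · rw [← Set.coe_ofPred, Nat.card_coe_set_eq,
      Algebra.setOf_leftMulMatrix_units_conj_eq_image_orbit B,
      Set.ncard_image_of_injective _ (Algebra.leftMulMatrix_injective B),
      IsGalois.ncard_orbit_eq_finrank (h3 ▸ Nat.prime_three) hξ, h3]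

theorem conjugate_in_GL_iff_galois_conjugate (F : Type*) [Field F] [Fintype F]
    (E : Type*) [Field E] [Fintype E] [Algebra F E]
    (h3 : Module.finrank F E = 3)
    (δ : F) (hδ : ¬∃ x : F, x ^ 3 = δ) (d : E) (hd : d ^ 3 = algebraMap F E δ)
    (B : Module.Basis (Fin 3) F E) (hB0 : B 0 = 1) (hB1 : B 1 = d) (hB2 : B 2 = d ^ 2)
    (q : ℕ) (hq : Fintype.card F = q) :
    (∀ ξ η : Eˣ,
        (∃ P : GL (Fin 3) F,
            LinearMap.toMatrix B B (LinearMap.mulLeft F (η : E)) =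
              P.val * LinearMap.toMatrix B B (LinearMap.mulLeft F (ξ : E)) * P⁻¹.val) ↔
          ((η : E) = (ξ : E) ∨ (η : E) = (ξ : E) ^ q ∨ (η : E) = (ξ : E) ^ q ^ 2)) ∧
    (∀ ξ : Eˣ, (ξ : E) ∉ Set.range (algebraMap F E) →
        Nat.card {N : Matrix (Fin 3) (Fin 3) F //
            (∃ η : Eˣ, N = LinearMap.toMatrix B B (LinearMap.mulLeft F (η : E))) ∧
            (∃ P : GL (Fin 3) F,
              N = P.val * LinearMap.toMatrix B B (LinearMap.mulLeft F (ξ : E)) * P⁻¹.val)} = 3) :=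
  conjugate_in_GL_iff_galois_conjugate_general F E h3 B q hq
end
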